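/- arXiv:1702.08698 — 3 statements merged into one kernel-verified Lean document; each statement's English description precedes it below -/
import Mathlib

section
/- Let f satisfy Condition B with constant K, let φ be a branching mechanism satisfying Grey's condition, and let (Q_t)_{t≥0} be the transition semigroup of the CB-process with branching mechanism φ. Then for every t ≥ 0 and all real numbers y ≥ x > 0, one has ∫_{[0,∞)} f(z) Q_t(y,dz) ≤ K f(1 + y/x) · ∫_{[0,∞)} f(z) Q_t(x,dz) (as an inequality in [0,∞]). Consequently, ∫ f(z) Q_t(y,dz) < ∞ if and only if ∫ f(z) Q_t(x,dz) < ∞. -/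
/-!
Since `∫ e^{-λz} Q_t(x, dz) = e^{-x v_t(λ)}` is exponential in `x`, uniqueness of Laplace
transforms makes `x ↦ Q_t(x, ·)` a convolution semigroup: `Q_t(x + x') = Q_t(x) ∗ Q_t(x')`.
Hence for nondecreasing `f` the moment `∫ f dQ_t(x, ·)` is nondecreasing in `x`, and for convex
`f` an induction on `n` using `f(u + w) ≤ f((n+1)u)/(n+1) + n/(n+1) · f((n+1)w/n)` gives
`∫ f dQ_t(nx, ·) ≤ ∫ f(nz) Q_t(x, dz)`. With `n = ⌈y/x⌉ ≤ 1 + y/x` and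
`f(nz) ≤ K f(n) f(z) ≤ K f(1 + y/x) f(z)` this yields the bound.
-/

open MeasureTheory Set Filter

noncomputable section

/-- A positive continuous function on `[0,∞)` satisfying Condition A:
there exist `c ≥ 0` and `K > 0` such that `f` is convex on `[c,∞)`,
`f (x*y) ≤ K * f x * f y` for `x, y ∈ [c,∞)`, and `f` is bounded on `[0,c)`. -/
def ConditionA (f : ℝ → ℝ) : Prop :=
  ContinuousOn f (Set.Ici 0) ∧ (∀ x, 0 ≤ x → 0 < f x) ∧
  ∃ c, 0 ≤ c ∧ ∃ K, 0 < K ∧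
    ConvexOn ℝ (Set.Ici c) f ∧
    (∀ x y, c ≤ x → c ≤ y → f (x * y) ≤ K * f x * f y) ∧
    ∃ M, ∀ x, 0 ≤ x → x < c → f x ≤ M

/-- Condition B with constant `K`: `f` is convex and nondecreasing on `[0,∞)`,
submultiplicative up to the constant `K`, and `f > 1` on `[0,∞)`. -/
def ConditionB (f : ℝ → ℝ) (K : ℝ) : Prop :=
  0 < K ∧ ConvexOn ℝ (Set.Ici 0) f ∧ MonotoneOn f (Set.Ici 0) ∧
  (∀ x y, 0 ≤ x → 0 ≤ y → f (x * y) ≤ K * f x * f y) ∧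
  (∀ x, 0 ≤ x → 1 < f x)

/-- `φ` is a branching mechanism with parameters `β ∈ ℝ`, `σ ≥ 0` and Lévy
measure `m` (a σ-finite measure carried by `(0,∞)` with `∫ 1 ∧ z² m(dz) < ∞`):
`φ(λ) = βλ + σ²λ²/2 + ∫ (e^{-zλ} - 1 + zλ 1_{z ≤ 1}) m(dz)`. -/
structure IsBranchingMechanism (φ : ℝ → ℝ) (β σ : ℝ) (m : Measure ℝ) : Prop where
  sigma_nonneg : 0 ≤ σ
  sigmaFinite : SigmaFinite m
  carrier : m (Set.Iic 0) = 0
  levy_finite : ∫⁻ z, ENNReal.ofReal (min 1 (z ^ 2)) ∂m < ⊤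
  form : ∀ l, 0 ≤ l →
    φ l = β * l + σ ^ 2 * l ^ 2 / 2
      + ∫ z, (Real.exp (-(z * l)) - 1 + (if z ≤ 1 then z * l else 0)) ∂m

/-- Grey's condition: `∫_{0+} φ(λ)⁻¹ dλ = ∞`, i.e. `φ⁻¹` fails to be
integrable on every right neighbourhood of `0`. -/
def GreyCondition (φ : ℝ → ℝ) : Prop :=
  ∀ ε, 0 < ε → ¬ IntegrableOn (fun l => (φ l)⁻¹) (Set.Ioo 0 ε) volume

/-- `v t l` is the nonnegative solution of `v_t(λ) = λ - ∫_0^t φ(v_s(λ)) ds`. -/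
def IsCumulant (φ : ℝ → ℝ) (v : ℝ → ℝ → ℝ) : Prop :=
  ∀ l, 0 ≤ l → ∀ t, 0 ≤ t →
    0 ≤ v t l ∧ v t l = l - ∫ s in (0:ℝ)..t, φ (v s l)

/-- `(Q t)_{t ≥ 0}` is the transition semigroup of the CB-process with cumulant
`v`: each `Q t x` is a probability measure on `[0,∞)` with Laplace transform
`∫ e^{-λ y} Q_t(x, dy) = e^{-x v_t(λ)}`. -/
def IsCBSemigroup (v : ℝ → ℝ → ℝ) (Q : ℝ → ℝ → Measure ℝ) : Prop :=
  ∀ t x, 0 ≤ t → 0 ≤ x →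
    IsProbabilityMeasure (Q t x) ∧ Q t x (Set.Iio 0) = 0 ∧
    ∀ l, 0 ≤ l → ∫ y, Real.exp (-(l * y)) ∂(Q t x) = Real.exp (-(x * v t l))

/-- `ψ` is an immigration mechanism with drift `h ≥ 0` and immigration measure
`ν` (a σ-finite measure carried by `(0,∞)` with `∫ 1 ∧ z ν(dz) < ∞`):
`ψ(λ) = hλ + ∫ (1 - e^{-λz}) ν(dz)`. -/
structure IsImmigrationMechanism (ψ : ℝ → ℝ) (h : ℝ) (ν : Measure ℝ) : Prop where
  h_nonneg : 0 ≤ h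
  sigmaFinite : SigmaFinite ν
  carrier : ν (Set.Iic 0) = 0
  levy_finite : ∫⁻ z, ENNReal.ofReal (min 1 z) ∂ν < ⊤
  form : ∀ l, 0 ≤ l → ψ l = h * l + ∫ z, (1 - Real.exp (-(l * z))) ∂ν

/-- `(Q^γ t)_{t ≥ 0}` is the transition semigroup of the CBI-process with
cumulant `v` and immigration mechanism `ψ`: each `Qγ t x` is a probability
measure on `[0,∞)` with Laplace transform
`∫ e^{-λ y} Q^γ_t(x, dy) = exp(-x v_t(λ) - ∫_0^t ψ(v_s(λ)) ds)`. -/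
def IsCBISemigroup (v : ℝ → ℝ → ℝ) (ψ : ℝ → ℝ) (Qγ : ℝ → ℝ → Measure ℝ) : Prop :=
  ∀ t x, 0 ≤ t → 0 ≤ x →
    IsProbabilityMeasure (Qγ t x) ∧ Qγ t x (Set.Iio 0) = 0 ∧
    ∀ l, 0 ≤ l →
      ∫ y, Real.exp (-(l * y)) ∂(Qγ t x)
        = Real.exp (-(x * v t l) - ∫ s in (0:ℝ)..t, ψ (v s l))

open Real
open scoped ENNReal BoundedContinuousFunction

lemma ae_nonneg_of_measure_Iio_eq_zero {ρ : Measure ℝ} (hρ : ρ (Iio 0) = 0) :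
    ∀ᵐ z ∂ρ, 0 ≤ z :=
  (measure_eq_zero_iff_ae_notMem.1 hρ).mono fun _ hz => not_lt.1 hz

lemma ae_nonneg_conv {μ ν : Measure ℝ} [SFinite ν] (hμ : ∀ᵐ z ∂μ, 0 ≤ z)
    (hν : ∀ᵐ z ∂ν, 0 ≤ z) : ∀ᵐ z ∂(μ ∗ ν), 0 ≤ z := by
  rw [Measure.conv, ae_map_iff (by fun_prop) measurableSet_Ici]
  filter_upwards [Measure.quasiMeasurePreserving_fst.ae hμ,
    Measure.quasiMeasurePreserving_snd.ae hν] with p h₁ h₂ using add_nonneg h₁ h₂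

lemma integral_exp_neg_mul_conv (μ ν : Measure ℝ) [SFinite μ] [SFinite ν] (l : ℝ) :
    ∫ z, exp (-(l * z)) ∂(μ ∗ ν) = (∫ z, exp (-(l * z)) ∂μ) * ∫ z, exp (-(l * z)) ∂ν := by
  rw [Measure.conv, integral_map (by fun_prop) (by fun_prop)]
  simp_rw [mul_add, neg_add, exp_add]
  exact integral_prod_mul (L := ℝ) (fun x => exp (-(l * x))) (fun y => exp (-(l * y)))

lemma lintegral_lintegral_add {α β : Type*} [MeasurableSpace α] [MeasurableSpace β]
    {μ : Measure α} {ν : Measure β} [IsProbabilityMeasure μ] [IsProbabilityMeasure ν]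
    (A : α → ℝ≥0∞) (B : β → ℝ≥0∞) :
    ∫⁻ x, ∫⁻ y, (A x + B y) ∂ν ∂μ = ∫⁻ x, A x ∂μ + ∫⁻ y, B y ∂ν := by
  simp_rw [lintegral_add_left measurable_const, lintegral_const, measure_univ, mul_one]
  rw [lintegral_add_right _ measurable_const, lintegral_const, measure_univ, mul_one]

lemma lintegral_ofReal_comp_max {ρ : Measure ℝ} (hρ : ∀ᵐ z ∂ρ, 0 ≤ z) (f : ℝ → ℝ) :
    ∫⁻ z, ENNReal.ofReal (f z) ∂ρ = ∫⁻ z, ENNReal.ofReal (f (max z 0)) ∂ρ :=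
  lintegral_congr_ae <| hρ.mono fun z hz => by simp [hz]

-- Agrees with `exp (-z)` on `[0, ∞)` but is bounded and injective on `ℝ`, so that its
-- polynomials separate finite measures carried by `[0, ∞)`.
def expNegExtension : ℝ →ᵇ ℝ :=
  .ofNormedAddCommGroup (fun z => exp (-max z 0) + (1 - exp (min z 0))) (by fun_prop) 2 fun z => by
    have h₁ : exp (-max z 0) ≤ 1 := exp_le_one_iff.2 (by simp)
    have h₂ : exp (min z 0) ≤ 1 := exp_le_one_iff.2 (min_le_right z 0)
    rw [Real.norm_eq_abs, abs_le]
    constructor <;> linarith [exp_pos (-max z 0), exp_pos (min z 0)]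

lemma expNegExtension_apply (z : ℝ) :
    expNegExtension z = exp (-max z 0) + (1 - exp (min z 0)) := rfl

lemma expNegExtension_apply_of_nonneg {z : ℝ} (hz : 0 ≤ z) : expNegExtension z = exp (-z) := by
  simp [expNegExtension_apply, hz]

lemma strictAnti_expNegExtension : StrictAnti expNegExtension := by
  intro a b hab
  simp only [expNegExtension_apply]
  rcases lt_or_ge a 0 with ha | ha
  · have h₁ : exp (-max b 0) ≤ exp (-max a 0) := by gcongr
    have h₂ : exp (min a 0) < exp (min b 0) := by
      rw [min_eq_left ha.le]; exact exp_lt_exp.2 (lt_min hab ha)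
    linarith
  · have h₁ : exp (-max b 0) < exp (-max a 0) := by
      rw [max_eq_left ha, max_eq_left (ha.trans hab.le)]; exact exp_lt_exp.2 (neg_lt_neg hab)
    have h₂ : exp (min a 0) ≤ exp (min b 0) := by gcongr
    linarith

lemma exists_polynomial_of_mem_adjoin_expNegExtension {g : ℝ →ᵇ ℝ}
    (hg : g ∈ StarAlgebra.adjoin ℝ {expNegExtension}) :
    ∃ p : Polynomial ℝ, ∀ z, g z = p.eval (expNegExtension z) := by
  induction hg using StarAlgebra.adjoin_induction with
  | mem g hg => exact ⟨.X, by simp [Set.mem_singleton_iff.1 hg]⟩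
  | algebraMap r => exact ⟨.C r, by simp⟩
  | add g h _ _ ihg ihh =>
    obtain ⟨p, hp⟩ := ihg
    obtain ⟨q, hq⟩ := ihh
    exact ⟨p + q, by simp [hp, hq]⟩
  | mul g h _ _ ihg ihh =>
    obtain ⟨p, hp⟩ := ihg
    obtain ⟨q, hq⟩ := ihh
    exact ⟨p * q, by simp [hp, hq]⟩
  | star g _ ihg => simpa using ihg

lemma integral_eval_expNegExtension {ρ : Measure ℝ} [IsFiniteMeasure ρ] (hρ : ∀ᵐ z ∂ρ, 0 ≤ z)
    (p : Polynomial ℝ) :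
    ∫ z, p.eval (expNegExtension z) ∂ρ
      = ∑ i ∈ Finset.range (p.natDegree + 1), p.coeff i * ∫ z, exp (-(i * z)) ∂ρ := by
  simp_rw [Polynomial.eval_eq_sum_range]
  rw [integral_finsetSum _ fun i _ => by
    simpa using ((expNegExtension ^ i).integrable ρ).const_mul (p.coeff i)]
  refine Finset.sum_congr rfl fun i _ => ?_
  rw [integral_const_mul]
  congr 1
  refine integral_congr_ae ?_
  filter_upwards [hρ] with z hz
  rw [expNegExtension_apply_of_nonneg hz, ← exp_nat_mul, mul_neg]

theorem MeasureTheory.Measure.ext_of_integral_exp_neg_nat_mul_eq {μ ν : Measure ℝ}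
    [IsFiniteMeasure μ] [IsFiniteMeasure ν] (hμ : ∀ᵐ z ∂μ, 0 ≤ z) (hν : ∀ᵐ z ∂ν, 0 ≤ z)
    (h : ∀ n : ℕ, ∫ z, exp (-(n * z)) ∂μ = ∫ z, exp (-(n * z)) ∂ν) : μ = ν := by
  refine ext_of_forall_mem_subalgebra_integral_eq_of_pseudoEMetric_complete_countable
    (A := StarAlgebra.adjoin ℝ {expNegExtension}) ?_ fun g hg => ?_
  · intro a b hab
    refine ⟨expNegExtension,
      ⟨_, ⟨expNegExtension, StarAlgebra.subset_adjoin ℝ _ rfl, rfl⟩, rfl⟩, ?_⟩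
    exact strictAnti_expNegExtension.injective.ne hab
  · obtain ⟨p, hp⟩ := exists_polynomial_of_mem_adjoin_expNegExtension hg
    simp_rw [hp, integral_eval_expNegExtension hμ, integral_eval_expNegExtension hν, h]

lemma ConvexOn.apply_add_le {s : Set ℝ} {g : ℝ → ℝ} (hg : ConvexOn ℝ s g) {t x y : ℝ}
    (ht₀ : 0 < t) (ht₁ : t < 1) (hx : t⁻¹ * x ∈ s) (hy : (1 - t)⁻¹ * y ∈ s) :
    g (x + y) ≤ t * g (t⁻¹ * x) + (1 - t) * g ((1 - t)⁻¹ * y) := by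
  have hsum : t * (t⁻¹ * x) + (1 - t) * ((1 - t)⁻¹ * y) = x + y := by
    field_simp [(sub_pos.2 ht₁).ne']
  simpa only [hsum, smul_eq_mul] using hg.2 hx hy ht₀.le (sub_pos.2 ht₁).le (by ring)

lemma ConvexOn.ofReal_apply_add_le {g : ℝ → ℝ} (hg : ConvexOn ℝ (Ici 0) g)
    (hg₀ : ∀ z, 0 ≤ z → 0 ≤ g z) {t x y : ℝ} (ht₀ : 0 < t) (ht₁ : t < 1) (hx : 0 ≤ x)
    (hy : 0 ≤ y) :
    ENNReal.ofReal (g (x + y)) ≤ ENNReal.ofReal t * ENNReal.ofReal (g (t⁻¹ * x))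
      + ENNReal.ofReal (1 - t) * ENNReal.ofReal (g ((1 - t)⁻¹ * y)) := by
  have hx' : 0 ≤ t⁻¹ * x := mul_nonneg (inv_nonneg.2 ht₀.le) hx
  have hy' : 0 ≤ (1 - t)⁻¹ * y := mul_nonneg (inv_nonneg.2 (sub_pos.2 ht₁).le) hy
  rw [← ENNReal.ofReal_mul ht₀.le, ← ENNReal.ofReal_mul (sub_pos.2 ht₁).le,
    ← ENNReal.ofReal_add (mul_nonneg ht₀.le (hg₀ _ hx'))
      (mul_nonneg (sub_pos.2 ht₁).le (hg₀ _ hy'))]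
  exact ENNReal.ofReal_le_ofReal (hg.apply_add_le ht₀ ht₁ hx' hy')

lemma ConvexOn.comp_const_mul_Ici {g : ℝ → ℝ} (hg : ConvexOn ℝ (Ici 0) g) {c : ℝ} (hc : 0 ≤ c) :
    ConvexOn ℝ (Ici 0) fun z => g (c * z) :=
  (hg.comp_linearMap (LinearMap.mulLeft ℝ c)).subset (fun _ hz => mul_nonneg hc hz) (convex_Ici 0)

lemma MonotoneOn.monotone_comp_max {f : ℝ → ℝ} (hf : MonotoneOn f (Ici 0)) :
    Monotone fun z => f (max z 0) :=
  fun a b hab => hf (le_max_right a 0) (le_max_right b 0) (max_le_max_right 0 hab)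

lemma ConvexOn.comp_max_Ici {f : ℝ → ℝ} (hf : ConvexOn ℝ (Ici 0) f) :
    ConvexOn ℝ (Ici 0) fun z => f (max z 0) :=
  hf.congr fun z hz => by simp [max_eq_left (mem_Ici.1 hz)]

namespace ConditionB

variable {f : ℝ → ℝ} {K : ℝ}

lemma apply_pos (hf : ConditionB f K) {z : ℝ} (hz : 0 ≤ z) : 0 < f z :=
  zero_lt_one.trans (hf.2.2.2.2 z hz)

lemma apply_mul_le (hf : ConditionB f K) {a b z : ℝ} (ha : 0 ≤ a) (hab : a ≤ b) (hz : 0 ≤ z) :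
    f (a * z) ≤ K * f b * f z := by
  have := hf.apply_pos hz
  obtain ⟨hK, -, hmono, hmul, -⟩ := hf
  calc f (a * z) ≤ K * f a * f z := hmul a z ha hz
    _ ≤ K * f b * f z := by
      gcongr
      exact hmono ha (ha.trans hab) hab

end ConditionB

structure IsNonnegConvolutionSemigroup (μ : ℝ → Measure ℝ) : Prop where
  isProbabilityMeasure : ∀ a, 0 ≤ a → IsProbabilityMeasure (μ a)
  ae_nonneg : ∀ a, 0 ≤ a → ∀ᵐ z ∂μ a, 0 ≤ z
  add : ∀ a b, 0 ≤ a → 0 ≤ b → μ (a + b) = μ a ∗ μ b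

namespace IsNonnegConvolutionSemigroup

variable {μ : ℝ → Measure ℝ}

lemma lintegral_mono (hμ : IsNonnegConvolutionSemigroup μ) {h : ℝ → ℝ≥0∞} (hh : Monotone h)
    {a b : ℝ} (ha : 0 ≤ a) (hab : a ≤ b) : ∫⁻ z, h z ∂μ a ≤ ∫⁻ z, h z ∂μ b := by
  have hba : 0 ≤ b - a := sub_nonneg.2 hab
  have := hμ.isProbabilityMeasure _ hba
  rw [show b = a + (b - a) by ring, hμ.add a (b - a) ha hba, Measure.lintegral_conv hh.measurable]
  refine MeasureTheory.lintegral_mono fun x => ?_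
  calc h x = ∫⁻ _, h x ∂μ (b - a) := by simp
    _ ≤ ∫⁻ y, h (x + y) ∂μ (b - a) :=
      lintegral_mono_ae <| (hμ.ae_nonneg _ hba).mono fun y hy => hh (le_add_of_nonneg_right hy)

lemma lintegral_le_lintegral_nat_mul (hμ : IsNonnegConvolutionSemigroup μ) {a : ℝ} (ha : 0 ≤ a)
    {n : ℕ} (hn : n ≠ 0) {g : ℝ → ℝ} (hgm : Measurable g) (hg : ConvexOn ℝ (Ici 0) g)
    (hg₀ : ∀ z, 0 ≤ z → 0 ≤ g z) :
    ∫⁻ z, ENNReal.ofReal (g z) ∂μ (n * a) ≤ ∫⁻ z, ENNReal.ofReal (g (n * z)) ∂μ a := by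
  rw [← Nat.one_le_iff_ne_zero] at hn
  induction n, hn using Nat.le_induction generalizing g with
  | base => simp
  | succ n hn ih =>
    have hn₀ : (0 : ℝ) < n := by exact_mod_cast hn
    have hna : 0 ≤ n * a := mul_nonneg hn₀.le ha
    have := hμ.isProbabilityMeasure a ha
    have := hμ.isProbabilityMeasure _ hna
    set t : ℝ := (n + 1 : ℝ)⁻¹
    set c : ℝ := (1 - t)⁻¹
    have ht₀ : 0 < t := by positivity
    have ht₁ : t < 1 := inv_lt_one_of_one_lt₀ (by linarith)
    have hc : 0 < c := inv_pos.2 (sub_pos.2 ht₁)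
    have hcn : ∀ z, c * (n * z) = (n + 1) * z := fun z => by
      simp only [c, t]; field_simp [hn₀.ne']; ring
    push_cast
    calc ∫⁻ z, ENNReal.ofReal (g z) ∂μ ((n + 1) * a)
        = ∫⁻ x, ∫⁻ y, ENNReal.ofReal (g (x + y)) ∂μ (n * a) ∂μ a := by
          rw [show ((n : ℝ) + 1) * a = a + n * a by ring, hμ.add _ _ ha hna,
            Measure.lintegral_conv hgm.ennreal_ofReal]
      _ ≤ ∫⁻ x, ∫⁻ y, (ENNReal.ofReal t * ENNReal.ofReal (g (t⁻¹ * x))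
            + ENNReal.ofReal (1 - t) * ENNReal.ofReal (g (c * y))) ∂μ (n * a) ∂μ a :=
          lintegral_mono_ae ((hμ.ae_nonneg a ha).mono fun x hx =>
            lintegral_mono_ae ((hμ.ae_nonneg _ hna).mono fun y hy =>
              hg.ofReal_apply_add_le hg₀ ht₀ ht₁ hx hy))
      _ = ENNReal.ofReal t * ∫⁻ x, ENNReal.ofReal (g (t⁻¹ * x)) ∂μ a
            + ENNReal.ofReal (1 - t) * ∫⁻ y, ENNReal.ofReal (g (c * y)) ∂μ (n * a) := by
          rw [lintegral_lintegral_add, lintegral_const_mul _ (by fun_prop),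
            lintegral_const_mul _ (by fun_prop)]
      _ ≤ ENNReal.ofReal t * ∫⁻ x, ENNReal.ofReal (g (t⁻¹ * x)) ∂μ a
            + ENNReal.ofReal (1 - t) * ∫⁻ z, ENNReal.ofReal (g (c * (n * z))) ∂μ a := by
          gcongr _ + _ * ?_
          exact ih (hgm.comp (measurable_const_mul c)) (hg.comp_const_mul_Ici hc.le)
            fun z hz => hg₀ _ (mul_nonneg hc.le hz)
      _ = ∫⁻ z, ENNReal.ofReal (g ((n + 1) * z)) ∂μ a := by
          simp_rw [hcn, t, inv_inv]
          rw [← add_mul, ← ENNReal.ofReal_add ht₀.le (sub_pos.2 ht₁).le, add_sub_cancel,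
            ENNReal.ofReal_one, one_mul]

lemma lintegral_ofReal_mono (hμ : IsNonnegConvolutionSemigroup μ) {f : ℝ → ℝ}
    (hf : MonotoneOn f (Ici 0)) {a b : ℝ} (ha : 0 ≤ a) (hab : a ≤ b) :
    ∫⁻ z, ENNReal.ofReal (f z) ∂μ a ≤ ∫⁻ z, ENNReal.ofReal (f z) ∂μ b := by
  rw [lintegral_ofReal_comp_max (hμ.ae_nonneg a ha),
    lintegral_ofReal_comp_max (hμ.ae_nonneg b (ha.trans hab))]
  exact hμ.lintegral_mono (ENNReal.ofReal_mono.comp hf.monotone_comp_max) ha hab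

lemma lintegral_le_mul_lintegral_of_conditionB (hμ : IsNonnegConvolutionSemigroup μ)
    {f : ℝ → ℝ} {K : ℝ} (hf : ConditionB f K) {x y : ℝ} (hx : 0 < x) (hxy : x ≤ y) :
    ∫⁻ z, ENNReal.ofReal (f z) ∂μ y
      ≤ ENNReal.ofReal (K * f (1 + y / x)) * ∫⁻ z, ENNReal.ofReal (f z) ∂μ x := by
  have hy : 0 < y := hx.trans_le hxy
  obtain ⟨n, hn, hyn, hn_le⟩ : ∃ n : ℕ, n ≠ 0 ∧ y ≤ n * x ∧ (n : ℝ) ≤ 1 + y / x := by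
    refine ⟨⌈y / x⌉₊, (Nat.ceil_pos.2 (by positivity)).ne', ?_, ?_⟩
    · rw [← div_le_iff₀ hx]; exact Nat.le_ceil _
    · linarith [Nat.ceil_lt_add_one (div_pos hy hx).le]
  have hC : 0 ≤ K * f (1 + y / x) := mul_nonneg hf.1.le (hf.apply_pos (by positivity)).le
  calc ∫⁻ z, ENNReal.ofReal (f z) ∂μ y
      ≤ ∫⁻ z, ENNReal.ofReal (f z) ∂μ (n * x) := hμ.lintegral_ofReal_mono hf.2.2.1 hy.le hyn
    _ = ∫⁻ z, ENNReal.ofReal (f (max z 0)) ∂μ (n * x) :=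
      lintegral_ofReal_comp_max (hμ.ae_nonneg _ (by positivity)) f
    _ ≤ ∫⁻ z, ENNReal.ofReal (f (max (n * z) 0)) ∂μ x :=
      hμ.lintegral_le_lintegral_nat_mul hx.le hn hf.2.2.1.monotone_comp_max.measurable
        hf.2.1.comp_max_Ici fun z _ => (hf.apply_pos (le_max_right z 0)).le
    _ ≤ ∫⁻ z, ENNReal.ofReal (K * f (1 + y / x)) * ENNReal.ofReal (f z) ∂μ x := by
      refine lintegral_mono_ae <| (hμ.ae_nonneg x hx.le).mono fun z hz => ?_
      rw [← ENNReal.ofReal_mul hC, max_eq_left (by positivity)]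
      exact ENNReal.ofReal_le_ofReal (hf.apply_mul_le n.cast_nonneg hn_le hz)
    _ = ENNReal.ofReal (K * f (1 + y / x)) * ∫⁻ z, ENNReal.ofReal (f z) ∂μ x := by
      rw [lintegral_const_mul' _ _ ENNReal.ofReal_ne_top]

end IsNonnegConvolutionSemigroup

lemma IsCBSemigroup.isNonnegConvolutionSemigroup {v : ℝ → ℝ → ℝ} {Q : ℝ → ℝ → Measure ℝ}
    (hQ : IsCBSemigroup v Q) {t : ℝ} (ht : 0 ≤ t) : IsNonnegConvolutionSemigroup (Q t) where
  isProbabilityMeasure a ha := (hQ t a ht ha).1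
  ae_nonneg a ha := ae_nonneg_of_measure_Iio_eq_zero (hQ t a ht ha).2.1
  add a b ha hb := by
    obtain ⟨_, hQa₀, hQa⟩ := hQ t a ht ha
    obtain ⟨_, hQb₀, hQb⟩ := hQ t b ht hb
    obtain ⟨_, hQab₀, hQab⟩ := hQ t (a + b) ht (add_nonneg ha hb)
    refine Measure.ext_of_integral_exp_neg_nat_mul_eq (ae_nonneg_of_measure_Iio_eq_zero hQab₀)
      (ae_nonneg_conv (ae_nonneg_of_measure_Iio_eq_zero hQa₀)
        (ae_nonneg_of_measure_Iio_eq_zero hQb₀)) fun n => ?_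
    rw [integral_exp_neg_mul_conv, hQa n n.cast_nonneg, hQb n n.cast_nonneg,
      hQab n n.cast_nonneg, ← exp_add, add_mul, neg_add]

theorem cb_f_moment_comparison_general
    (f : ℝ → ℝ) (K : ℝ) (hf : ConditionB f K)
    (v : ℝ → ℝ → ℝ)
    (Q : ℝ → ℝ → Measure ℝ) (hQ : IsCBSemigroup v Q)
    (t : ℝ) (ht : 0 ≤ t) (x y : ℝ) (hx : 0 < x) (hxy : x ≤ y) :
    (∫⁻ z, ENNReal.ofReal (f z) ∂(Q t y))
        ≤ ENNReal.ofReal (K * f (1 + y / x)) * ∫⁻ z, ENNReal.ofReal (f z) ∂(Q t x)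
      ∧ ((∫⁻ z, ENNReal.ofReal (f z) ∂(Q t y)) < ⊤ ↔
          (∫⁻ z, ENNReal.ofReal (f z) ∂(Q t x)) < ⊤) := by
  have hμ := hQ.isNonnegConvolutionSemigroup ht
  have hbound := hμ.lintegral_le_mul_lintegral_of_conditionB hf hx hxy
  exact ⟨hbound, fun h => (hμ.lintegral_ofReal_mono hf.2.2.1 hx.le hxy).trans_lt h,
    fun h => hbound.trans_lt (ENNReal.mul_lt_top ENNReal.ofReal_lt_top h)⟩

/-- Corollary 3.4: for `f` satisfying Condition B and `y ≥ x > 0`,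
`∫ f dQ_t(y,·) ≤ K f(1 + y/x) ∫ f dQ_t(x,·)`, and consequently the two
`f`-moments are simultaneously finite. -/
theorem cb_f_moment_comparison
    (f : ℝ → ℝ) (K : ℝ) (hf : ConditionB f K)
    (φ : ℝ → ℝ) (β σ : ℝ) (m : Measure ℝ)
    (hφ : IsBranchingMechanism φ β σ m) (hGrey : GreyCondition φ)
    (v : ℝ → ℝ → ℝ) (hv : IsCumulant φ v)
    (Q : ℝ → ℝ → Measure ℝ) (hQ : IsCBSemigroup v Q)
    (t : ℝ) (ht : 0 ≤ t) (x y : ℝ) (hx : 0 < x) (hxy : x ≤ y) :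
    (∫⁻ z, ENNReal.ofReal (f z) ∂(Q t y))
        ≤ ENNReal.ofReal (K * f (1 + y / x)) * ∫⁻ z, ENNReal.ofReal (f z) ∂(Q t x)
      ∧ ((∫⁻ z, ENNReal.ofReal (f z) ∂(Q t y)) < ⊤ ↔
          (∫⁻ z, ENNReal.ofReal (f z) ∂(Q t x)) < ⊤) :=
  cb_f_moment_comparison_general f K hf v Q hQ t ht x y hx hxy
end
end

section
/- Let f satisfy Condition B with constant K, let φ be a branching mechanism satisfying Grey's condition, and let (Q_t)_{t≥0} be the transition semigroup of the CB-process with branching mechanism φ. Then for every probability measure μ on [0,∞) (the law of the initial state X_0) and every t ≥ 0, one has (as an inequality in [0,∞]): ∫_{[0,∞)} ∫_{[0,∞)} f(y) Q_t(x,dy) μ(dx) ≤ (1/2) K² f(2) [f(1) + ∫_{[0,∞)} f(x) μ(dx)] · ∫_{[0,∞)} f(z) Q_t(1,dz). -/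
open MeasureTheory Set Filter

noncomputable section

/-!
The Laplace transform `exp (-x v_t(λ))` of `Q_t(x, ·)` is multiplicative in the initial state,
so `Q_t(x + y) = Q_t(x) ∗ Q_t(y)`. Hence `x ↦ ∫ g dQ_t(x)` is nondecreasing for nondecreasing
`g`, and `Q_t(n)` is the `n`-fold convolution power of `Q_t(1)`, so Jensen's inequality gives
`∫ f dQ_t(n) ≤ ∫ f(n ·) dQ_t(1) ≤ K f(n) ∫ f dQ_t(1)`. With `n = ⌊x⌋ + 1 ≤ x + 1`, convexity and
submultiplicativity give `f(n) ≤ f(x + 1) ≤ (f(2x) + f(2)) / 2 ≤ K f(2) (f(x) + f(1)) / 2`,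
which bounds `∫ f dQ_t(x)`; integrating in `x` against `μ` gives the claim.
-/

open scoped ENNReal

theorem ae_nonneg_of_measure_Iio_eq_zero_s3 {ν : Measure ℝ} (h : ν (Iio 0) = 0) :
    ∀ᵐ y ∂ν, 0 ≤ y := by
  simpa using measure_eq_zero_iff_ae_notMem.mp h

namespace MeasureTheory.Measure

theorem ext_of_forall_integral_pow_eq {a b : ℝ} {ρ₁ ρ₂ : Measure (Icc a b)}
    [IsFiniteMeasure ρ₁] [IsFiniteMeasure ρ₂]
    (h : ∀ n : ℕ, ∫ u, (u : ℝ) ^ n ∂ρ₁ = ∫ u, (u : ℝ) ^ n ∂ρ₂) : ρ₁ = ρ₂ := by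
  have hint : ∀ (ρ : Measure (Icc a b)) [IsFiniteMeasure ρ] (p : Polynomial ℝ),
      Integrable (fun u : Icc a b => p.eval (u : ℝ)) ρ := fun ρ _ p =>
    (BoundedContinuousFunction.mkOfCompact (p.toContinuousMapOn (Icc a b))).integrable ρ
  have hpoly : ∀ p : Polynomial ℝ, ∫ u, p.eval (u : ℝ) ∂ρ₁ = ∫ u, p.eval (u : ℝ) ∂ρ₂ := by
    intro p
    induction p using Polynomial.induction_on' with
    | add p q hp hq =>
      simp only [Polynomial.eval_add]
      rw [integral_add (hint ρ₁ p) (hint ρ₁ q), integral_add (hint ρ₂ p) (hint ρ₂ q), hp, hq]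
    | monomial n c =>
      simp only [Polynomial.eval_monomial]
      rw [integral_const_mul, integral_const_mul, h n]
  have hclosed : ∀ (ρ : Measure (Icc a b)) [IsFiniteMeasure ρ],
      Continuous fun g : C(Icc a b, ℝ) => ∫ u, g u ∂ρ := by
    intro ρ _
    refine (continuous_integral.comp (ContinuousMap.toLp 1 ρ ℝ).continuous).congr fun g => ?_
    exact integral_congr_ae (ContinuousMap.coeFn_toLp ρ g)
  refine ext_of_forall_integral_eq_of_IsFiniteMeasure fun g => ?_
  have hg := continuousMap_mem_polynomialFunctions_closure a b g.toContinuousMap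
  rw [← SetLike.mem_coe, Subalgebra.topologicalClosure_coe, polynomialFunctions_coe] at hg
  refine closure_minimal ?_ (isClosed_eq (hclosed ρ₁) (hclosed ρ₂)) hg
  rintro _ ⟨p, rfl⟩
  exact hpoly p

theorem ext_of_forall_integral_exp_neg_mul_eq {ν₁ ν₂ : Measure ℝ}
    [IsFiniteMeasure ν₁] [IsFiniteMeasure ν₂] (h₁ : ν₁ (Iio 0) = 0) (h₂ : ν₂ (Iio 0) = 0)
    (h : ∀ n : ℕ, ∫ y, Real.exp (-(n * y)) ∂ν₁ = ∫ y, Real.exp (-(n * y)) ∂ν₂) : ν₁ = ν₂ := by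
  -- `y ↦ e^{-y}` carries `[0, ∞)` into `[0, 1]`, turning Laplace transforms into moments.
  let T : ℝ → Icc (0 : ℝ) 1 := fun y => projIcc 0 1 zero_le_one (Real.exp (-y))
  have hT : Measurable T :=
    (continuous_projIcc.comp (Real.continuous_exp.comp continuous_neg)).measurable
  have hTy : ∀ y, 0 ≤ y → (T y : ℝ) = Real.exp (-y) := fun y hy => congrArg Subtype.val
    (projIcc_of_mem _ ⟨(Real.exp_pos _).le, Real.exp_le_one_iff.mpr (neg_nonpos.mpr hy)⟩)
  have hmoment : ∀ (ν : Measure ℝ), ν (Iio 0) = 0 → ∀ n : ℕ,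
      ∫ u, (u : ℝ) ^ n ∂(ν.map T) = ∫ y, Real.exp (-(n * y)) ∂ν := by
    intro ν hν n
    rw [integral_map hT.aemeasurable (by fun_prop)]
    refine integral_congr_ae ?_
    filter_upwards [ae_nonneg_of_measure_Iio_eq_zero_s3 hν] with y hy
    rw [hTy y hy, ← Real.exp_nat_mul, mul_neg]
  have hinv : ∀ (ν : Measure ℝ), ν (Iio 0) = 0 →
      (ν.map T).map (fun u : Icc (0 : ℝ) 1 => -Real.log u) = ν := by
    intro ν hν
    rw [map_map (by fun_prop : Measurable fun u : Icc (0 : ℝ) 1 => -Real.log u) hT]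
    conv_rhs => rw [← Measure.map_id (μ := ν)]
    refine map_congr ?_
    filter_upwards [ae_nonneg_of_measure_Iio_eq_zero_s3 hν] with y hy
    simp [hTy y hy]
  have hmap : ν₁.map T = ν₂.map T := ext_of_forall_integral_pow_eq fun n => by
    rw [hmoment ν₁ h₁, hmoment ν₂ h₂, h]
  rw [← hinv ν₁ h₁, ← hinv ν₂ h₂, hmap]

theorem conv_Iio_eq_zero {μ ν : Measure ℝ} (hμ : μ (Iio 0) = 0) (hν : ν (Iio 0) = 0) :
    (μ ∗ ν) (Iio 0) = 0 := by
  rw [Measure.conv, map_apply measurable_add measurableSet_Iio]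
  refine measure_eq_zero_iff_ae_notMem.mpr ?_
  filter_upwards [quasiMeasurePreserving_fst.ae (ae_nonneg_of_measure_Iio_eq_zero_s3 hμ),
    quasiMeasurePreserving_snd.ae (ae_nonneg_of_measure_Iio_eq_zero_s3 hν)] with p h₁ h₂
  simp only [mem_preimage, mem_Iio, not_lt]
  positivity

theorem integral_exp_neg_mul_conv (μ ν : Measure ℝ) [SFinite μ] [SFinite ν] (l : ℝ) :
    ∫ z, Real.exp (-(l * z)) ∂(μ ∗ ν)
      = (∫ x, Real.exp (-(l * x)) ∂μ) * ∫ y, Real.exp (-(l * y)) ∂ν := by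
  rw [Measure.conv, integral_map (by fun_prop) (by fun_prop), ← integral_prod_mul]
  simp only [mul_add, neg_add, Real.exp_add]

end MeasureTheory.Measure

theorem ConvexOn.apply_add_le_s3 {g : ℝ → ℝ} (hg : ConvexOn ℝ (Ici 0) g) {a b p q : ℝ}
    (ha : 0 ≤ a) (hb : 0 ≤ b) (hp : 0 < p) (hq : 0 < q) (hpq : p + q = 1) :
    g (a + b) ≤ p * g (a / p) + q * g (b / q) := by
  have := hg.2 (mem_Ici.mpr (div_nonneg ha hp.le)) (mem_Ici.mpr (div_nonneg hb hq.le))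
    hp.le hq.le hpq
  simpa only [smul_eq_mul, mul_div_cancel₀ _ hp.ne', mul_div_cancel₀ _ hq.ne'] using this

theorem lintegral_ofReal_conv_le {μ ν : Measure ℝ} [IsProbabilityMeasure μ]
    [IsProbabilityMeasure ν] (hμ : ∀ᵐ x ∂μ, 0 ≤ x) (hν : ∀ᵐ y ∂ν, 0 ≤ y) {g : ℝ → ℝ}
    (hg : ConvexOn ℝ (Ici 0) g) (hgm : Measurable g) {p q : ℝ} (hp : 0 < p) (hq : 0 < q)
    (hpq : p + q = 1) :
    ∫⁻ z, ENNReal.ofReal (g z) ∂(μ ∗ ν)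
      ≤ ENNReal.ofReal p * ∫⁻ x, ENNReal.ofReal (g (x / p)) ∂μ
        + ENNReal.ofReal q * ∫⁻ y, ENNReal.ofReal (g (y / q)) ∂ν := by
  have hpt : ∀ a b, 0 ≤ a → 0 ≤ b → ENNReal.ofReal (g (a + b))
      ≤ ENNReal.ofReal p * ENNReal.ofReal (g (a / p))
        + ENNReal.ofReal q * ENNReal.ofReal (g (b / q)) := fun a b ha hb => by
    rw [← ENNReal.ofReal_mul hp.le, ← ENNReal.ofReal_mul hq.le]
    exact (ENNReal.ofReal_le_ofReal (hg.apply_add_le_s3 ha hb hp hq hpq)).trans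
      ENNReal.ofReal_add_le
  calc ∫⁻ z, ENNReal.ofReal (g z) ∂(μ ∗ ν)
      = ∫⁻ a, ∫⁻ b, ENNReal.ofReal (g (a + b)) ∂ν ∂μ := Measure.lintegral_conv (by fun_prop)
    _ ≤ ∫⁻ a, (ENNReal.ofReal p * ENNReal.ofReal (g (a / p))
          + ENNReal.ofReal q * ∫⁻ b, ENNReal.ofReal (g (b / q)) ∂ν) ∂μ := by
        refine lintegral_mono_ae ?_
        filter_upwards [hμ] with a ha
        calc ∫⁻ b, ENNReal.ofReal (g (a + b)) ∂ν
            ≤ ∫⁻ b, (ENNReal.ofReal p * ENNReal.ofReal (g (a / p))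
                + ENNReal.ofReal q * ENNReal.ofReal (g (b / q))) ∂ν :=
              lintegral_mono_ae (by filter_upwards [hν] with b hb using hpt a b ha hb)
          _ = _ := by
              rw [lintegral_add_left measurable_const, lintegral_const, measure_univ, mul_one,
                lintegral_const_mul _ (by fun_prop)]
    _ = _ := by
        rw [lintegral_add_right _ measurable_const, lintegral_const, measure_univ, mul_one,
          lintegral_const_mul _ (by fun_prop)]

section CBSemigroup

variable {v : ℝ → ℝ → ℝ} {Q : ℝ → ℝ → Measure ℝ} {t : ℝ}

theorem IsCBSemigroup.isProbabilityMeasure (hQ : IsCBSemigroup v Q) (ht : 0 ≤ t) {x : ℝ}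
    (hx : 0 ≤ x) : IsProbabilityMeasure (Q t x) :=
  (hQ t x ht hx).1

theorem IsCBSemigroup.ae_nonneg (hQ : IsCBSemigroup v Q) (ht : 0 ≤ t) {x : ℝ} (hx : 0 ≤ x) :
    ∀ᵐ y ∂(Q t x), 0 ≤ y :=
  ae_nonneg_of_measure_Iio_eq_zero_s3 (hQ t x ht hx).2.1

theorem IsCBSemigroup.add_eq_conv (hQ : IsCBSemigroup v Q) (ht : 0 ≤ t) {x y : ℝ}
    (hx : 0 ≤ x) (hy : 0 ≤ y) : Q t (x + y) = Q t x ∗ Q t y := by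
  obtain ⟨_, hx₀, hxL⟩ := hQ t x ht hx
  obtain ⟨_, hy₀, hyL⟩ := hQ t y ht hy
  obtain ⟨_, hxy₀, hxyL⟩ := hQ t (x + y) ht (add_nonneg hx hy)
  refine Measure.ext_of_forall_integral_exp_neg_mul_eq hxy₀
    (Measure.conv_Iio_eq_zero hx₀ hy₀) fun n => ?_
  rw [Measure.integral_exp_neg_mul_conv, hxyL n n.cast_nonneg, hxL n n.cast_nonneg,
    hyL n n.cast_nonneg, ← Real.exp_add]
  ring_nf

theorem IsCBSemigroup.monotoneOn_lintegral (hQ : IsCBSemigroup v Q) (ht : 0 ≤ t)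
    {g : ℝ → ℝ≥0∞} (hg : Monotone g) : MonotoneOn (fun x => ∫⁻ y, g y ∂(Q t x)) (Ici 0) := by
  intro x hx x' _ hxx'
  have hd : 0 ≤ x' - x := sub_nonneg.mpr hxx'
  have := hQ.isProbabilityMeasure ht hd
  show ∫⁻ y, g y ∂(Q t x) ≤ ∫⁻ y, g y ∂(Q t x')
  rw [← add_sub_cancel x x', hQ.add_eq_conv ht hx hd, Measure.lintegral_conv hg.measurable]
  refine lintegral_mono fun a => ?_
  calc g a = ∫⁻ _, g a ∂(Q t (x' - x)) := by rw [lintegral_const, measure_univ, mul_one]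
    _ ≤ ∫⁻ b, g (a + b) ∂(Q t (x' - x)) := by
        refine lintegral_mono_ae ?_
        filter_upwards [hQ.ae_nonneg ht hd] with b hb using hg (le_add_of_nonneg_right hb)

theorem IsCBSemigroup.lintegral_le_lintegral_mul (hQ : IsCBSemigroup v Q) (ht : 0 ≤ t)
    {n : ℕ} (hn : n ≠ 0) {g : ℝ → ℝ} (hg : ConvexOn ℝ (Ici 0) g) (hgm : Measurable g) :
    ∫⁻ y, ENNReal.ofReal (g y) ∂(Q t n) ≤ ∫⁻ y, ENNReal.ofReal (g (n * y)) ∂(Q t 1) := by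
  induction n, Nat.one_le_iff_ne_zero.mpr hn using Nat.le_induction generalizing g with
  | base => simp
  | succ n hn₁ ih =>
    have hn₀ : (0 : ℝ) < n := by exact_mod_cast hn₁
    have := hQ.isProbabilityMeasure ht hn₀.le
    have := hQ.isProbabilityMeasure ht zero_le_one
    -- Jensen on `Q t (n+1) = Q t n ∗ Q t 1` with weights `n/(n+1)` and `1/(n+1)`, then the
    -- induction hypothesis for `y ↦ g ((n+1)/n * y)`.
    have hgc : ConvexOn ℝ (Ici 0) fun y => g ((n + 1) / n * y) :=
      (hg.comp_linearMap (LinearMap.mulLeft ℝ ((n + 1) / n))).subset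
        (fun y (hy : 0 ≤ y) => show 0 ≤ (n + 1) / n * y from mul_nonneg (by positivity) hy)
        (convex_Ici (0 : ℝ))
    have hih : ∫⁻ x, ENNReal.ofReal (g ((n + 1) / n * x)) ∂(Q t n)
        ≤ ∫⁻ y, ENNReal.ofReal (g ((n + 1) * y)) ∂(Q t 1) := by
      convert ih (by omega) hgc (hgm.comp (measurable_const_mul _)) using 5
      field_simp
    have hp : (0 : ℝ) < n / (n + 1) := by positivity
    have hq : (0 : ℝ) < 1 / (n + 1) := by positivity
    have hpq : (n : ℝ) / (n + 1) + 1 / (n + 1) = 1 := by field_simp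
    calc ∫⁻ y, ENNReal.ofReal (g y) ∂(Q t ↑(n + 1))
        = ∫⁻ y, ENNReal.ofReal (g y) ∂(Q t n ∗ Q t 1) := by
          rw [Nat.cast_succ, hQ.add_eq_conv ht hn₀.le zero_le_one]
      _ ≤ ENNReal.ofReal (n / (n + 1)) * ∫⁻ x, ENNReal.ofReal (g ((n + 1) / n * x)) ∂(Q t n)
          + ENNReal.ofReal (1 / (n + 1)) * ∫⁻ y, ENNReal.ofReal (g ((n + 1) * y)) ∂(Q t 1) := by
          convert lintegral_ofReal_conv_le (hQ.ae_nonneg ht hn₀.le) (hQ.ae_nonneg ht zero_le_one)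
            hg hgm hp hq hpq using 6 <;> field_simp
      _ ≤ ENNReal.ofReal (n / (n + 1)) * ∫⁻ y, ENNReal.ofReal (g ((n + 1) * y)) ∂(Q t 1)
          + ENNReal.ofReal (1 / (n + 1)) * ∫⁻ y, ENNReal.ofReal (g ((n + 1) * y)) ∂(Q t 1) := by
          gcongr
      _ = ∫⁻ y, ENNReal.ofReal (g (↑(n + 1) * y)) ∂(Q t 1) := by
          rw [← add_mul, ← ENNReal.ofReal_add hp.le hq.le, hpq, ENNReal.ofReal_one, one_mul,
            Nat.cast_succ]

end CBSemigroup

theorem lintegral_comp_max_zero {ν : Measure ℝ} (hν : ∀ᵐ y ∂ν, 0 ≤ y) (g : ℝ → ℝ≥0∞) :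
    ∫⁻ y, g (max y 0) ∂ν = ∫⁻ y, g y ∂ν :=
  lintegral_congr_ae (by filter_upwards [hν] with y hy using by rw [max_eq_left hy])

namespace ConditionB

variable {f : ℝ → ℝ} {K : ℝ}

theorem apply_nonneg (hf : ConditionB f K) {x : ℝ} (hx : 0 ≤ x) : 0 ≤ f x :=
  zero_le_one.trans (hf.2.2.2.2 x hx).le

theorem monotone_comp_max_zero (hf : ConditionB f K) : Monotone fun y => f (max y 0) :=
  fun a b hab => hf.2.2.1 (mem_Ici.mpr (le_max_right a 0)) (mem_Ici.mpr (le_max_right b 0))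
    (max_le_max hab le_rfl)

theorem comp_max_zero (hf : ConditionB f K) : ConditionB (fun y => f (max y 0)) K := by
  have hmono := hf.monotone_comp_max_zero
  obtain ⟨hK, hconv, -, hmul, hone⟩ := hf
  refine ⟨hK, hconv.congr fun y (hy : 0 ≤ y) => by simp [hy], hmono.monotoneOn _,
    fun x y hx hy => ?_, fun x hx => by simpa [hx] using hone x hx⟩
  simpa [hx, hy, mul_nonneg hx hy] using hmul x y hx hy

theorem mul_apply_le {x s : ℝ} (hf : ConditionB f K) (hx : 0 ≤ x) (hs : 0 ≤ s)
    (hsx : s ≤ x + 1) : K * f s ≤ K ^ 2 * f 2 / 2 * (f 1 + f x) := by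
  obtain ⟨hK, hconv, hmono, hmul, hone⟩ := hf
  have h₁ : f s ≤ f (x + 1) := hmono hs (mem_Ici.mpr (by linarith)) hsx
  have h₂ : f (x + 1) ≤ 1 / 2 * f (2 * x) + 1 / 2 * f 2 := by
    have := hconv.2 (mem_Ici.mpr (by linarith : (0 : ℝ) ≤ 2 * x))
      (mem_Ici.mpr (by norm_num : (0 : ℝ) ≤ 2)) (by norm_num : (0 : ℝ) ≤ 1 / 2)
      (by norm_num : (0 : ℝ) ≤ 1 / 2) (by norm_num)
    simpa only [smul_eq_mul, show (1 / 2 : ℝ) * (2 * x) + 1 / 2 * 2 = x + 1 by ring] using this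
  have h₃ : f (2 * x) ≤ K * f 2 * f x := hmul 2 x (by norm_num) hx
  have h₄ : f 2 ≤ K * f 2 * f 1 := by simpa using hmul 2 1 (by norm_num) zero_le_one
  calc K * f s ≤ K * (1 / 2 * (K * f 2 * f x) + 1 / 2 * (K * f 2 * f 1)) := by
        gcongr; linarith
    _ = K ^ 2 * f 2 / 2 * (f 1 + f x) := by ring

theorem lintegral_comp_mul_le (hf : ConditionB f K) {ν : Measure ℝ} (hν : ∀ᵐ y ∂ν, 0 ≤ y)
    {s : ℝ} (hs : 0 ≤ s) :
    ∫⁻ y, ENNReal.ofReal (f (s * y)) ∂ν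
      ≤ ENNReal.ofReal (K * f s) * ∫⁻ y, ENNReal.ofReal (f y) ∂ν := by
  rw [← lintegral_const_mul' _ _ ENNReal.ofReal_ne_top]
  refine lintegral_mono_ae ?_
  filter_upwards [hν] with y hy
  rw [← ENNReal.ofReal_mul (mul_nonneg hf.1.le (hf.apply_nonneg hs))]
  exact ENNReal.ofReal_le_ofReal (hf.2.2.2.1 s y hs hy)

end ConditionB

theorem IsCBSemigroup.lintegral_le_of_conditionB {v : ℝ → ℝ → ℝ} {Q : ℝ → ℝ → Measure ℝ}
    {t : ℝ} (hQ : IsCBSemigroup v Q) (ht : 0 ≤ t) {f : ℝ → ℝ} {K : ℝ} (hf : ConditionB f K)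
    (hfm : Monotone f) {x : ℝ} (hx : 0 ≤ x) :
    ∫⁻ y, ENNReal.ofReal (f y) ∂(Q t x)
      ≤ ENNReal.ofReal (K ^ 2 * f 2 / 2)
          * ((ENNReal.ofReal (f 1) + ENNReal.ofReal (f x))
              * ∫⁻ z, ENNReal.ofReal (f z) ∂(Q t 1)) := by
  obtain ⟨n, hn, hxn, hnx⟩ : ∃ n : ℕ, n ≠ 0 ∧ x ≤ n ∧ (n : ℝ) ≤ x + 1 :=
    ⟨⌊x⌋₊ + 1, Nat.succ_ne_zero _, by exact_mod_cast (Nat.lt_floor_add_one x).le,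
      by push_cast; linarith [Nat.floor_le hx]⟩
  have hn₀ : (0 : ℝ) ≤ n := n.cast_nonneg
  calc ∫⁻ y, ENNReal.ofReal (f y) ∂(Q t x)
      ≤ ∫⁻ y, ENNReal.ofReal (f y) ∂(Q t n) :=
        hQ.monotoneOn_lintegral ht (fun a b hab => ENNReal.ofReal_le_ofReal (hfm hab)) hx hn₀ hxn
    _ ≤ ∫⁻ y, ENNReal.ofReal (f (n * y)) ∂(Q t 1) :=
        hQ.lintegral_le_lintegral_mul ht hn hf.2.1 hfm.measurable
    _ ≤ ENNReal.ofReal (K * f n) * ∫⁻ z, ENNReal.ofReal (f z) ∂(Q t 1) :=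
        hf.lintegral_comp_mul_le (hQ.ae_nonneg ht zero_le_one) hn₀
    _ ≤ ENNReal.ofReal (K ^ 2 * f 2 / 2 * (f 1 + f x)) * ∫⁻ z, ENNReal.ofReal (f z) ∂(Q t 1) :=
        mul_le_mul_left (ENNReal.ofReal_le_ofReal (hf.mul_apply_le hx hn₀ hnx)) _
    _ = _ := by
        have hf₁ := hf.apply_nonneg zero_le_one
        have hf₂ := hf.apply_nonneg zero_le_two
        rw [ENNReal.ofReal_mul (by positivity), ENNReal.ofReal_add hf₁ (hf.apply_nonneg hx),
          mul_assoc]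

theorem cb_f_moment_initial_bound_general
    (f : ℝ → ℝ) (K : ℝ) (hf : ConditionB f K)
    (v : ℝ → ℝ → ℝ)
    (Q : ℝ → ℝ → Measure ℝ) (hQ : IsCBSemigroup v Q)
    (μ : Measure ℝ) (hμ : IsProbabilityMeasure μ) (hμ0 : μ (Set.Iio 0) = 0)
    (t : ℝ) (ht : 0 ≤ t) :
    (∫⁻ x, (∫⁻ y, ENNReal.ofReal (f y) ∂(Q t x)) ∂μ)
      ≤ ENNReal.ofReal (K ^ 2 * f 2 / 2)
          * ((ENNReal.ofReal (f 1) + ∫⁻ x, ENNReal.ofReal (f x) ∂μ)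
              * ∫⁻ z, ENNReal.ofReal (f z) ∂(Q t 1)) := by
  -- Replacing `f` by `y ↦ f (max y 0)` changes no integral and makes it monotone on all of `ℝ`.
  set F : ℝ → ℝ := fun y => f (max y 0)
  have hF : ConditionB F K := hf.comp_max_zero
  have hFm : Monotone F := hf.monotone_comp_max_zero
  have hμ₀ := ae_nonneg_of_measure_Iio_eq_zero_s3 hμ0
  have hswap : ∀ {ν : Measure ℝ}, (∀ᵐ y ∂ν, 0 ≤ y) →
      ∫⁻ y, ENNReal.ofReal (F y) ∂ν = ∫⁻ y, ENNReal.ofReal (f y) ∂ν :=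
    fun hν => lintegral_comp_max_zero hν fun y => ENNReal.ofReal (f y)
  have hFm' : Measurable fun y => ENNReal.ofReal (F y) :=
    ENNReal.measurable_ofReal.comp hFm.measurable
  calc ∫⁻ x, ∫⁻ y, ENNReal.ofReal (f y) ∂(Q t x) ∂μ
      = ∫⁻ x, ∫⁻ y, ENNReal.ofReal (F y) ∂(Q t x) ∂μ :=
        lintegral_congr_ae <| by
          filter_upwards [hμ₀] with x hx using (hswap (hQ.ae_nonneg ht hx)).symm
    _ ≤ ∫⁻ x, ENNReal.ofReal (K ^ 2 * F 2 / 2) * ((ENNReal.ofReal (F 1) + ENNReal.ofReal (F x))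
          * ∫⁻ z, ENNReal.ofReal (F z) ∂(Q t 1)) ∂μ :=
        lintegral_mono_ae <| by
          filter_upwards [hμ₀] with x hx using hQ.lintegral_le_of_conditionB ht hF hFm hx
    _ = ENNReal.ofReal (K ^ 2 * F 2 / 2) * ((ENNReal.ofReal (F 1) + ∫⁻ x, ENNReal.ofReal (F x) ∂μ)
          * ∫⁻ z, ENNReal.ofReal (F z) ∂(Q t 1)) := by
        have hG : Measurable fun x => ENNReal.ofReal (F 1) + ENNReal.ofReal (F x) :=
          measurable_const.add hFm'
        rw [lintegral_const_mul _ (hG.mul_const _), lintegral_mul_const _ hG,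
          lintegral_add_left measurable_const, lintegral_const, measure_univ, mul_one]
    _ = _ := by
        rw [hswap hμ₀, hswap (hQ.ae_nonneg ht zero_le_one)]
        norm_num [F]

/-- Corollary 3.5: for a CB-process with arbitrary initial law `μ`,
`P f(X_t) ≤ (1/2) K² f(2) [f(1) + P f(X_0)] ⬝ ∫ f dQ_t(1,·)`
as an inequality in `[0,∞]`. -/
theorem cb_f_moment_initial_bound
    (f : ℝ → ℝ) (K : ℝ) (hf : ConditionB f K)
    (φ : ℝ → ℝ) (β σ : ℝ) (m : Measure ℝ)
    (hφ : IsBranchingMechanism φ β σ m) (hGrey : GreyCondition φ)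
    (v : ℝ → ℝ → ℝ) (hv : IsCumulant φ v)
    (Q : ℝ → ℝ → Measure ℝ) (hQ : IsCBSemigroup v Q)
    (μ : Measure ℝ) (hμ : IsProbabilityMeasure μ) (hμ0 : μ (Set.Iio 0) = 0)
    (t : ℝ) (ht : 0 ≤ t) :
    (∫⁻ x, (∫⁻ y, ENNReal.ofReal (f y) ∂(Q t x)) ∂μ)
      ≤ ENNReal.ofReal (K ^ 2 * f 2 / 2)
          * ((ENNReal.ofReal (f 1) + ∫⁻ x, ENNReal.ofReal (f x) ∂μ)
              * ∫⁻ z, ENNReal.ofReal (f z) ∂(Q t 1)) :=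
  cb_f_moment_initial_bound_general f K hf v Q hQ μ hμ hμ0 t ht
end
end

section
/- Let f be an unbounded positive continuous function on [0,∞) satisfying Condition A (with constants c ≥ 0 and K > 0). Then there exists a constant a ≥ 0 such that the function f_a defined by f_a(x) := f(max(a, x)) satisfies Condition B with some constant K' > 0; that is, f_a is convex and nondecreasing on [0,∞), satisfies f_a(xy) ≤ K' f_a(x) f_a(y) for all x, y ≥ 0, and satisfies f_a(x) > 1 for all x ≥ 0. -/
open MeasureTheory Set Filter

noncomputable section

/-!
Beyond its record value on the compact interval `[0, max c 1]`, a convex function can no longer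
decrease, so as soon as the unbounded `f` exceeds that record (and `1`) at some `a`, it is
nondecreasing on `[a, ∞)`. Freezing `f` at `f a` to the left of `a` then keeps convexity, and
submultiplicativity survives because `max a (x * y) ≤ max a x * max a y` once `a ≥ 1`.
-/

theorem ConvexOn.le_of_left_le {s : Set ℝ} {f : ℝ → ℝ} (hf : ConvexOn ℝ s f) {x y z : ℝ}
    (hx : x ∈ s) (hxy : x < y) (hfxy : f x ≤ f y) (hz : z ∈ s) (hyz : y ≤ z) : f y ≤ f z := by
  rcases hyz.eq_or_lt with rfl | hyz
  · exact le_rfl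
  refine hf.le_right_of_left_le hx hz ?_ hfxy
  rw [openSegment_eq_Ioo (hxy.trans hyz)]
  exact ⟨hxy, hyz⟩

theorem ConvexOn.monotoneOn_inter_Ici {s : Set ℝ} {f : ℝ → ℝ} (hf : ConvexOn ℝ s f) {x y : ℝ}
    (hx : x ∈ s) (hxy : x < y) (hfxy : f x ≤ f y) : MonotoneOn f (s ∩ Ici y) := by
  intro u hu w hw huw
  have hxu : x < u := hxy.trans_le hu.2
  have hfyu : f y ≤ f u := hf.le_of_left_le hx hxy hfxy hu.1 hu.2
  exact hf.le_of_left_le hx hxu (hfxy.trans hfyu) hw.1 huw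

theorem ConvexOn.comp_max {g : ℝ → ℝ} {a : ℝ} (hg : ConvexOn ℝ (Ici a) g)
    (hmono : MonotoneOn g (Ici a)) : ConvexOn ℝ univ (fun x => g (max a x)) := by
  have himage : max a '' univ = Ici a := by
    ext y
    refine ⟨fun ⟨x, _, hx⟩ => hx ▸ le_max_left a x, fun hy => ⟨y, mem_univ y, max_eq_right hy⟩⟩
  have hmax : ConvexOn ℝ univ (max a) :=
    (convexOn_const a convex_univ).sup (convexOn_id convex_univ)
  rw [← himage] at hg hmono
  exact hg.comp hmax hmono

theorem MonotoneOn.comp_max {g : ℝ → ℝ} {a : ℝ} (hmono : MonotoneOn g (Ici a)) :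
    Monotone (fun x => g (max a x)) :=
  fun _ _ hxy => hmono (mem_Ici.2 (le_max_left _ _)) (mem_Ici.2 (le_max_left _ _))
    (max_le_max le_rfl hxy)

theorem max_mul_le_max_mul_max {a x y : ℝ} (ha : 1 ≤ a) (hy : 0 ≤ y) :
    max a (x * y) ≤ max a x * max a y := by
  have hax : 0 ≤ max a x := (zero_le_one.trans ha).trans (le_max_left a x)
  refine max_le ?_ (mul_le_mul (le_max_right a x) (le_max_right a y) hy hax)
  calc a = a * 1 := (mul_one a).symm
    _ ≤ max a x * max a y :=
      mul_le_mul (le_max_left a x) (ha.trans (le_max_left a y)) zero_le_one hax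

theorem conditionB_comp_max {g : ℝ → ℝ} {a K : ℝ} (ha : 1 ≤ a) (hK : 0 < K)
    (hconv : ConvexOn ℝ (Ici a) g) (hmono : MonotoneOn g (Ici a))
    (hsub : ∀ x y, a ≤ x → a ≤ y → g (x * y) ≤ K * g x * g y) (hga : 1 < g a) :
    ConditionB (fun x => g (max a x)) K := by
  refine ⟨hK, (hconv.comp_max hmono).subset (subset_univ _) (convex_Ici 0),
    hmono.comp_max.monotoneOn _, fun x y _ hy => ?_, fun x _ => ?_⟩
  · calc g (max a (x * y)) ≤ g (max a x * max a y) :=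
          hmono (mem_Ici.2 (le_max_left _ _))
            (mem_Ici.2 ((le_max_left _ _).trans (max_mul_le_max_mul_max ha hy)))
            (max_mul_le_max_mul_max ha hy)
      _ ≤ K * g (max a x) * g (max a y) := hsub _ _ (le_max_left a x) (le_max_left a y)
  · exact hga.trans_le (hmono self_mem_Ici (mem_Ici.2 (le_max_left a x)) (le_max_left a x))

theorem exists_gt_forall_Icc_lt_of_unbounded {f : ℝ → ℝ} (hcont : ContinuousOn f (Ici 0))
    (hub : ∀ M : ℝ, ∃ x, 0 ≤ x ∧ M < f x) (b M : ℝ) :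
    ∃ a, b < a ∧ M < f a ∧ ∀ y ∈ Icc 0 b, f y < f a := by
  obtain ⟨B, hB⟩ :=
    isCompact_Icc.bddAbove_image (hcont.mono fun _ hx => hx.1 : ContinuousOn f (Icc 0 b))
  obtain ⟨a, ha0, hfa⟩ := hub (max B M)
  have hbound : ∀ y ∈ Icc 0 b, f y < f a :=
    fun y hy => ((hB (mem_image_of_mem f hy)).trans (le_max_left B M)).trans_lt hfa
  refine ⟨a, ?_, (le_max_right B M).trans_lt hfa, hbound⟩
  by_contra! hab
  exact lt_irrefl _ (hbound a ⟨ha0, hab⟩)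

/-- If `f` is an unbounded positive continuous function on `[0,∞)` satisfying
Condition A, then there is `a ≥ 0` such that `x ↦ f (max a x)` satisfies
Condition B with some constant `K' > 0`. -/
theorem conditionA_to_conditionB
    (f : ℝ → ℝ) (hf : ConditionA f)
    (hub : ∀ M : ℝ, ∃ x, 0 ≤ x ∧ M < f x) :
    ∃ a, 0 ≤ a ∧ ∃ K' : ℝ, ConditionB (fun x => f (max a x)) K' := by
  obtain ⟨hcont, -, c, hc0, K, hK, hconv, hsub, -⟩ := hf
  obtain ⟨a, hba, hfa1, hfa⟩ := exists_gt_forall_Icc_lt_of_unbounded hcont hub (max c 1) 1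
  have hca : c < a := (le_max_left c 1).trans_lt hba
  have h1a : 1 ≤ a := (le_max_right c 1).trans hba.le
  have hmono : MonotoneOn f (Ici a) :=
    (hconv.monotoneOn_inter_Ici self_mem_Ici hca (hfa c ⟨hc0, le_max_left c 1⟩).le).mono
      fun x hx => ⟨hca.le.trans hx, hx⟩
  refine ⟨a, zero_le_one.trans h1a, K, conditionB_comp_max h1a hK ?_ hmono ?_ hfa1⟩
  · exact hconv.subset (Ici_subset_Ici.2 hca.le) (convex_Ici a)
  · exact fun x y hx hy => hsub x y (hca.le.trans hx) (hca.le.trans hy)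
end
end
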